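/- arXiv:1211.4274 — 7 statements merged into one kernel-verified Lean document; each statement's English description precedes it below -/
import Mathlib

section
/- Let 0 < τ < 1, M > 0, r ≥ 1, and let R : ℕ → ℂ be a sequence of complex numbers such that for every real t ≥ r the set {j : |R_j| ≤ t} is finite with cardinality at most M·t^{1−τ}. Then the sum of 1/|R_j| over all indices j with |R_j| > r is at most (M/τ)·r^{−τ} (in particular the family (1/|R_j|)_{j : |R_j| > r} is summable). -/
open MeasureTheory Set
open scoped Finset

/-!
Writing `1 / a = ∫_a^∞ t⁻² dt` and summing over the indices with `r < a_j` turns the sum into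
`∫_r^∞ ν(t) t⁻² dt`, where `ν(t)` counts the indices with `a_j < t`. The counting bound
`ν(t) ≤ M t^(1-τ)` leaves `M ∫_r^∞ t^(-1-τ) dt = (M / τ) r^(-τ)`. Summability follows because every
finite partial sum obeys this bound.
-/

theorem inv_eq_integral_Ioi_rpow_neg_two {a : ℝ} (ha : 0 < a) :
    a⁻¹ = ∫ t in Ioi a, t ^ (-2 : ℝ) := by
  rw [integral_Ioi_rpow_of_lt (by norm_num) ha]
  norm_num [Real.rpow_neg_one]

theorem integral_Ioi_rpow_neg_one_sub {τ r : ℝ} (hτ : 0 < τ) (hr : 0 < r) :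
    ∫ t in Ioi r, t ^ (-1 - τ) = r ^ (-τ) / τ := by
  rw [integral_Ioi_rpow_of_lt (by linarith) hr]
  ring_nf

theorem sum_indicator_Ioi_apply {ι : Type*} (s : Finset ι) (a : ι → ℝ) (f : ℝ → ℝ) (t : ℝ) :
    ∑ i ∈ s, (Ioi (a i)).indicator f t = #{i ∈ s | a i < t} * f t := by
  simp [Set.indicator_apply, Finset.sum_ite]

theorem sum_inv_eq_integral_card_mul_rpow {ι : Type*} (s : Finset ι) {a : ι → ℝ} {r : ℝ}
    (hr : 0 < r) (hs : ∀ i ∈ s, r < a i) :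
    ∑ i ∈ s, (a i)⁻¹ = ∫ t in Ioi r, #{i ∈ s | a i < t} * t ^ (-2 : ℝ) := by
  have hint : IntegrableOn (fun t : ℝ ↦ t ^ (-2 : ℝ)) (Ioi r) :=
    integrableOn_Ioi_rpow_of_lt (by norm_num) hr
  calc ∑ i ∈ s, (a i)⁻¹ = ∑ i ∈ s, ∫ t in Ioi r, (Ioi (a i)).indicator (· ^ (-2 : ℝ)) t := by
        refine Finset.sum_congr rfl fun i hi ↦ ?_
        rw [setIntegral_indicator measurableSet_Ioi,
          Ioi_inter_Ioi, sup_eq_right.2 (hs i hi).le,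
          inv_eq_integral_Ioi_rpow_neg_two (hr.trans (hs i hi))]
    _ = ∫ t in Ioi r, ∑ i ∈ s, (Ioi (a i)).indicator (· ^ (-2 : ℝ)) t :=
        (integral_finsetSum s fun i _ ↦ hint.indicator measurableSet_Ioi).symm
    _ = _ := by simp only [sum_indicator_Ioi_apply]

theorem sum_inv_le_of_card_le {ι : Type*} (s : Finset ι) {a : ι → ℝ} {τ M r : ℝ}
    (hτ : 0 < τ) (hr : 0 < r) (hs : ∀ i ∈ s, r < a i)
    (hcard : ∀ t, r ≤ t → (#{i ∈ s | a i ≤ t} : ℝ) ≤ M * t ^ (1 - τ)) :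
    ∑ i ∈ s, (a i)⁻¹ ≤ M / τ * r ^ (-τ) := by
  have hbound : ∀ t ∈ Ioi r, (#{i ∈ s | a i < t} : ℝ) * t ^ (-2 : ℝ) ≤ M * t ^ (-1 - τ) := by
    intro t ht
    have ht0 : 0 < t := hr.trans ht
    calc (#{i ∈ s | a i < t} : ℝ) * t ^ (-2 : ℝ)
        ≤ M * t ^ (1 - τ) * t ^ (-2 : ℝ) := by
          gcongr
          exact (Nat.cast_le.2 (Finset.card_le_card (Finset.monotone_filter_right s fun _ _ ↦ le_of_lt))).trans
            (hcard t (le_of_lt ht))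
      _ = M * t ^ (-1 - τ) := by
          rw [mul_assoc, ← Real.rpow_add ht0]; ring_nf
  calc ∑ i ∈ s, (a i)⁻¹ = ∫ t in Ioi r, #{i ∈ s | a i < t} * t ^ (-2 : ℝ) :=
        sum_inv_eq_integral_card_mul_rpow s hr hs
    _ ≤ ∫ t in Ioi r, M * t ^ (-1 - τ) := by
        refine integral_mono_of_nonneg ?_
          ((integrableOn_Ioi_rpow_of_lt (by linarith) hr).const_mul M)
          ((ae_restrict_iff' measurableSet_Ioi).2 (ae_of_all _ hbound))
        refine (ae_restrict_iff' measurableSet_Ioi).2 (ae_of_all _ fun t ht ↦ ?_)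
        have : 0 < t := hr.trans ht
        positivity
    _ = M / τ * r ^ (-τ) := by
        rw [integral_const_mul, integral_Ioi_rpow_neg_one_sub hτ hr]; ring

theorem summable_inv_and_tsum_inv_le_of_ncard_le {ι : Type*} {a : ι → ℝ} {τ M r : ℝ}
    (hτ : 0 < τ) (hr : 0 < r)
    (hcount : ∀ t, r ≤ t → {i | a i ≤ t}.Finite ∧ ({i | a i ≤ t}.ncard : ℝ) ≤ M * t ^ (1 - τ)) :
    Summable (fun i : {i // r < a i} ↦ (a i)⁻¹) ∧
      ∑' i : {i // r < a i}, (a i)⁻¹ ≤ M / τ * r ^ (-τ) := by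
  have hbound (u : Finset {i // r < a i}) : ∑ i ∈ u, (a i)⁻¹ ≤ M / τ * r ^ (-τ) := by
    refine sum_inv_le_of_card_le u hτ hr (fun i _ ↦ i.2) fun t ht ↦ ?_
    obtain ⟨hfin, hle⟩ := hcount t ht
    refine le_trans ?_ hle
    rw [Set.ncard_eq_toFinset_card _ hfin, Nat.cast_le]
    exact Finset.card_le_card_of_injOn Subtype.val
      (fun i hi ↦ by simpa using (Finset.mem_filter.1 hi).2) Subtype.val_injective.injOn
  have hnonneg : 0 ≤ fun i : {i // r < a i} ↦ (a i)⁻¹ := fun i ↦ inv_nonneg.2 (hr.trans i.2).le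
  exact ⟨summable_of_sum_le hnonneg hbound, Real.tsum_le_of_sum_le hnonneg hbound⟩

theorem stmt_4_general (τ M r : ℝ) (hτ0 : 0 < τ) (hr : 1 ≤ r)
    (R : ℕ → ℂ)
    (hcount : ∀ t : ℝ, r ≤ t →
      ({j : ℕ | ‖R j‖ ≤ t}).Finite ∧
        (({j : ℕ | ‖R j‖ ≤ t}).ncard : ℝ) ≤ M * t ^ (1 - τ)) :
    Summable (fun j : {j : ℕ // r < ‖R j‖} => 1 / ‖R j.1‖) ∧
      ∑' j : {j : ℕ // r < ‖R j‖}, 1 / ‖R j.1‖ ≤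
        (M / τ) * r ^ (-τ) := by
  simp only [one_div]
  exact summable_inv_and_tsum_inv_le_of_ncard_le hτ0 (by linarith) hcount

/-- If the zero-counting function of the sequence `R : ℕ → ℂ` satisfies
`ν(t) ≤ M t^(1-τ)` for all `t ≥ r` (with `0 < τ < 1`, `M > 0`, `r ≥ 1`), then
the family `(1/|R_j|)` over indices with `|R_j| > r` is summable and its sum is
at most `(M/τ) r^(-τ)`. -/
theorem stmt_4 (τ M r : ℝ) (hτ0 : 0 < τ) (hτ1 : τ < 1) (hM : 0 < M) (hr : 1 ≤ r)
    (R : ℕ → ℂ)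
    (hcount : ∀ t : ℝ, r ≤ t →
      ({j : ℕ | ‖R j‖ ≤ t}).Finite ∧
        (({j : ℕ | ‖R j‖ ≤ t}).ncard : ℝ) ≤ M * t ^ (1 - τ)) :
    Summable (fun j : {j : ℕ // r < ‖R j‖} => 1 / ‖R j.1‖) ∧
      ∑' j : {j : ℕ // r < ‖R j‖}, 1 / ‖R j.1‖ ≤
        (M / τ) * r ^ (-τ) :=
  stmt_4_general τ M r hτ0 hr R hcount
end

section
/- For every η > 0 there exists a constant M > 0 such that for every real number w ≥ 1: ∑_{n=0}^∞ w^n · e^{−η·n·log n} ≤ M · exp((η/2)·w^{1/η}). -/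
/-!
Write `w ^ n e^(-η n log n) = exp (n log w - η n log n)`. Since `x ↦ x (t + 1 - log x)` is
maximised at `x = e^t` with value `e^t`, taking `t = log w / η - 3/4` and using `e^(3/4) ≥ 2`
bounds the exponent by `(η/2) w^(1/η) - (η/4) n`. The series is therefore dominated by
`exp ((η/2) w^(1/η))` times the geometric series of ratio `e^(-η/4)`, so `M = (1 - e^(-η/4))⁻¹`.
-/

open Real

lemma two_le_exp_three_quarters : (2 : ℝ) ≤ exp (3 / 4) := by
  have := quadratic_le_exp_of_nonneg (x := 3 / 4) (by norm_num)
  norm_num at this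
  linarith

lemma mul_sub_log_add_one_le_exp (t : ℝ) {x : ℝ} (hx : 0 ≤ x) :
    x * (t - log x + 1) ≤ exp t := by
  rcases hx.eq_or_lt with rfl | hx
  · simpa using (exp_pos t).le
  · calc x * (t - log x + 1) ≤ x * exp (t - log x) :=
          mul_le_mul_of_nonneg_left (add_one_le_exp _) hx.le
      _ = exp t := by rw [exp_sub, exp_log hx]; field_simp

lemma mul_sub_mul_mul_log_le (a : ℝ) {η x : ℝ} (hη : 0 < η) (hx : 0 ≤ x) :
    x * a - η * x * log x ≤ η / 2 * exp (a / η) - η / 4 * x := by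
  have hmax := mul_le_mul_of_nonneg_left (mul_sub_log_add_one_le_exp (a / η - 3 / 4) hx) hη.le
  have hshift : exp (a / η - 3 / 4) ≤ exp (a / η) / 2 := by
    rw [exp_sub]
    exact div_le_div_of_nonneg_left (exp_pos _).le two_pos two_le_exp_three_quarters
  have hexpand : η * (x * (a / η - 3 / 4 - log x + 1)) = x * a - η * x * log x + η / 4 * x := by
    field_simp
    ring
  nlinarith

lemma pow_mul_exp_neg_mul_log_le {η w : ℝ} (hη : 0 < η) (hw : 0 < w) (n : ℕ) :
    w ^ n * exp (-η * n * log n) ≤ exp (η / 2 * w ^ (1 / η)) * exp (-(η / 4)) ^ n := by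
  have hrpow : w ^ (1 / η) = exp (log w / η) := by rw [rpow_def_of_pos hw]; ring_nf
  rw [← exp_log (pow_pos hw n), ← exp_nat_mul, ← exp_add, ← exp_add, hrpow, log_pow]
  apply exp_le_exp.mpr
  linarith [mul_sub_mul_mul_log_le (log w) hη n.cast_nonneg]

/-- For every `η > 0` there is `M > 0` such that for every real `w ≥ 1`:
`∑_{n=0}^∞ w^n e^(-η n log n) ≤ M exp((η/2) w^(1/η))`. -/
theorem stmt_6 (η : ℝ) (hη : 0 < η) :
    ∃ M : ℝ, 0 < M ∧ ∀ w : ℝ, 1 ≤ w →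
      (∑' n : ℕ, w ^ n * Real.exp (-η * n * Real.log n)) ≤
        M * Real.exp ((η / 2) * w ^ (1 / η)) := by
  set r := exp (-(η / 4))
  have hr0 : 0 ≤ r := (exp_pos _).le
  have hr1 : r < 1 := exp_lt_one_iff.mpr (by linarith)
  refine ⟨(1 - r)⁻¹, inv_pos.mpr (by linarith), fun w hw => ?_⟩
  have hbound := pow_mul_exp_neg_mul_log_le hη (by linarith : 0 < w)
  have hgeom := (summable_geometric_of_lt_one hr0 hr1).mul_left (exp (η / 2 * w ^ (1 / η)))
  calc _ ≤ ∑' n : ℕ, exp (η / 2 * w ^ (1 / η)) * r ^ n :=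
        (hgeom.of_nonneg_of_le (fun n => by positivity) hbound).tsum_le_tsum hbound hgeom
    _ = _ := by rw [tsum_mul_left, tsum_geometric_of_lt_one hr0 hr1, mul_comm]
end

section
/- Let c > 0 and define F : [1,∞) → ℝ by F(r) = ∑_{n=0}^∞ e^{−c·n·log n}·r^n (the series converges for every r). Then (log log F(r))/(log r) tends to 1/c as r → ∞; i.e., the entire function with Taylor coefficients e^{−c·n·log n} has growth order exactly 1/c. -/
/-!
With `p = r ^ (1 / c)`, the `n`-th term of `F(r)` is `exp (c n (log p - log n))`. Since
`n (log p - log n) ≤ p - n`, the series is at most `exp (c p) · ∑ e^{-cn}`, while its term at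
`n = ⌊p / e⌋` is at least `exp (c p / (2e))`. So `log F(r)` is comparable to `r ^ (1 / c)`, and a
second logarithm turns this into `log log F(r) = (1 / c) log r + O(1)`.
-/

open Real Filter Asymptotics Topology

namespace Real

lemma mul_log_sub_log_le {x y : ℝ} (hx : 0 < x) (hy : 0 ≤ y) :
    y * (log x - log y) ≤ x - y := by
  rcases hy.eq_or_lt with rfl | hy
  · simpa using hx.le
  have := log_le_sub_one_of_pos (div_pos hx hy)
  rw [log_div hx.ne' hy.ne'] at this
  calc y * (log x - log y) ≤ y * (x / y - 1) := by gcongr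
    _ = x - y := by field_simp

end Real

namespace Asymptotics

theorem IsTheta.tendsto_log_div_log {g : ℝ → ℝ} {a : ℝ}
    (h : g =Θ[atTop] fun r => r ^ a) :
    Tendsto (fun r => log (g r) / log r) atTop (𝓝 a) := by
  obtain ⟨A, hA, hup⟩ := h.isBigO.exists_pos
  obtain ⟨B, hB, hlo⟩ := h.symm.isBigO.exists_pos
  have hbdd : (fun r => log (g r) - a * log r) =O[atTop] fun _ => (1 : ℝ) := by
    refine IsBigO.of_bound (|log A| + |log B|) ?_
    filter_upwards [hup.bound, hlo.bound, eventually_gt_atTop 0] with r hgr hrg hr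
    have hra : 0 < r ^ a := rpow_pos_of_pos hr a
    rw [norm_of_nonneg hra.le] at hgr hrg
    have hg : 0 < ‖g r‖ := pos_of_mul_pos_right (hra.trans_le hrg) hB.le
    have h1 : log ‖g r‖ ≤ log A + a * log r := by
      rw [← log_rpow hr, ← log_mul hA.ne' hra.ne']
      exact log_le_log hg hgr
    have h2 : a * log r ≤ log B + log ‖g r‖ := by
      rw [← log_rpow hr, ← log_mul hB.ne' hg.ne']
      exact log_le_log hra hrg
    rw [norm_eq_abs, log_abs] at h1 h2
    rw [norm_one, mul_one, norm_eq_abs, abs_le]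
    constructor <;> linarith [le_abs_self (log A), le_abs_self (log B), abs_nonneg (log A),
      abs_nonneg (log B)]
  have := ((hbdd.trans_isLittleO isLittleO_const_log_atTop).tendsto_div_nhds_zero).add_const a
  rw [zero_add] at this
  refine this.congr' ?_
  filter_upwards [eventually_gt_atTop 1] with r hr
  have : log r ≠ 0 := (log_pos hr).ne'
  field_simp
  ring

end Asymptotics

section GrowthSeries

variable {c r : ℝ}

lemma exp_mul_log_mul_pow_eq (hc : c ≠ 0) (hr : 0 < r) (n : ℕ) :
    exp (-c * n * log n) * r ^ n = exp (c * n * (log (r ^ (1 / c)) - log n)) := by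
  rw [← exp_log (pow_pos hr n), ← exp_add, log_pow, log_rpow hr]
  congr 1
  field_simp
  ring

lemma exp_mul_log_mul_pow_le (hc : 0 < c) (hr : 0 < r) (n : ℕ) :
    exp (-c * n * log n) * r ^ n ≤ exp (c * r ^ (1 / c)) * exp (-c) ^ n := by
  rw [exp_mul_log_mul_pow_eq hc.ne' hr, ← exp_nat_mul, ← exp_add, exp_le_exp]
  have := mul_le_mul_of_nonneg_left
    (mul_log_sub_log_le (rpow_pos_of_pos hr (1 / c)) n.cast_nonneg) hc.le
  linarith

lemma summable_exp_mul_log_mul_pow (hc : 0 < c) (hr : 0 < r) :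
    Summable fun n : ℕ => exp (-c * n * log n) * r ^ n :=
  .of_nonneg_of_le (fun n => by positivity) (exp_mul_log_mul_pow_le hc hr)
    ((summable_geometric_of_lt_one (exp_pos _).le
      (exp_lt_one_iff.2 (neg_lt_zero.2 hc))).mul_left _)

lemma tsum_exp_mul_log_mul_pow_le (hc : 0 < c) (hr : 0 < r) :
    ∑' n : ℕ, exp (-c * n * log n) * r ^ n ≤ exp (c * r ^ (1 / c)) * (1 - exp (-c))⁻¹ := by
  have hq : exp (-c) < 1 := exp_lt_one_iff.2 (neg_lt_zero.2 hc)
  rw [← tsum_geometric_of_lt_one (exp_pos _).le hq, ← tsum_mul_left]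
  exact (summable_exp_mul_log_mul_pow hc hr).tsum_le_tsum (exp_mul_log_mul_pow_le hc hr)
    ((summable_geometric_of_lt_one (exp_pos _).le hq).mul_left _)

lemma one_le_tsum_exp_mul_log_mul_pow (hc : 0 < c) (hr : 0 < r) :
    1 ≤ ∑' n : ℕ, exp (-c * n * log n) * r ^ n := by
  simpa using (summable_exp_mul_log_mul_pow hc hr).le_tsum 0 fun n _ => by positivity

lemma mul_log_sub_log_le_log_tsum (hc : 0 < c) (hr : 0 < r) (n : ℕ) :
    c * n * (log (r ^ (1 / c)) - log n) ≤ log (∑' n : ℕ, exp (-c * n * log n) * r ^ n) := by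
  rw [← log_exp (c * n * _), ← exp_mul_log_mul_pow_eq hc.ne' hr]
  exact log_le_log (by positivity)
    ((summable_exp_mul_log_mul_pow hc hr).le_tsum n fun m _ => by positivity)

lemma mul_rpow_le_log_tsum (hc : 0 < c) (hr : 0 < r) (hp : 2 * exp 1 ≤ r ^ (1 / c)) :
    c * r ^ (1 / c) ≤ 2 * exp 1 * log (∑' n : ℕ, exp (-c * n * log n) * r ^ n) := by
  set p := r ^ (1 / c)
  set n := ⌊p / exp 1⌋₊
  have hpe : 2 ≤ p / exp 1 := (le_div_iff₀ (exp_pos 1)).2 hp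
  have hn_le : (n : ℝ) ≤ p / exp 1 := Nat.floor_le (by linarith)
  have hn_ge : p / exp 1 - 1 < n := Nat.sub_one_lt_floor _
  have hn : 0 < (n : ℝ) := by linarith
  have hlog : 1 ≤ log p - log n := by
    have := log_le_log hn hn_le
    rw [log_div (by positivity) (exp_ne_zero 1), log_exp] at this
    linarith
  calc c * p = 2 * exp 1 * (c * (p / exp 1 / 2)) := by field_simp
    _ ≤ 2 * exp 1 * (c * n * 1) := by rw [mul_one]; gcongr; linarith
    _ ≤ 2 * exp 1 * (c * n * (log p - log n)) := by gcongr
    _ ≤ _ := by gcongr; exact mul_log_sub_log_le_log_tsum hc hr n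

theorem isTheta_log_tsum_exp_mul_log_mul_pow (hc : 0 < c) :
    (fun r => log (∑' n : ℕ, exp (-c * n * log n) * r ^ n)) =Θ[atTop] fun r => r ^ (1 / c) := by
  have hlarge : ∀ᶠ r in atTop, 0 < r ∧ 2 * exp 1 ≤ r ^ (1 / c) :=
    (eventually_gt_atTop 0).and ((tendsto_rpow_atTop (by positivity)).eventually_ge_atTop _)
  have hC : 1 ≤ (1 - exp (-c))⁻¹ :=
    (one_le_inv₀ (by simpa using hc)).2 (by linarith [exp_pos (-c)])
  refine ⟨.of_bound (c + log (1 - exp (-c))⁻¹) ?_, .of_bound (2 * exp 1 / c) ?_⟩ <;>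
    filter_upwards [hlarge] with r ⟨hr, hp⟩ <;>
    rw [norm_of_nonneg (log_nonneg (one_le_tsum_exp_mul_log_mul_pow hc hr)),
      norm_of_nonneg (rpow_nonneg hr.le _)]
  · have hp1 : 1 ≤ r ^ (1 / c) := by linarith [add_one_le_exp 1]
    have hlogC := log_nonneg hC
    calc _ ≤ log (exp (c * r ^ (1 / c)) * (1 - exp (-c))⁻¹) :=
          log_le_log (by linarith [one_le_tsum_exp_mul_log_mul_pow hc hr])
            (tsum_exp_mul_log_mul_pow_le hc hr)
      _ = c * r ^ (1 / c) + log (1 - exp (-c))⁻¹ := by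
          rw [log_mul (exp_ne_zero _) (by linarith), log_exp]
      _ ≤ _ := by nlinarith
  · have := mul_rpow_le_log_tsum hc hr hp
    rw [div_mul_eq_mul_div, le_div_iff₀ hc]
    linarith

end GrowthSeries

/-- The entire function `F(r) = ∑_{n=0}^∞ e^(-c n log n) r^n` (with `c > 0`) has
growth order exactly `1/c`: `(log log F(r)) / (log r) → 1/c` as `r → ∞`. -/
theorem stmt_7 (c : ℝ) (hc : 0 < c) :
    Filter.Tendsto
      (fun r : ℝ =>
        Real.log (Real.log (∑' n : ℕ, Real.exp (-c * n * Real.log n) * r ^ n)) /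
          Real.log r)
      Filter.atTop (nhds (1 / c)) :=
  (isTheta_log_tsum_exp_mul_log_mul_pow hc).tendsto_log_div_log
end

section
/- Fix p ≥ 1 and real numbers α_1 < β_1 < α_2 < β_2 < ⋯ < α_p < β_p, set 𝔢 = ⋃_{j=1}^p [α_j, β_j] and r(x) = ∏_{j=1}^p (x − α_j)(x − β_j). Then there exist constants c_1 ∈ ℝ, c_2 > 0 and δ_1 > 0 such that for every δ with 0 < δ < δ_1 and every j ∈ {1,…,p}: ∫_𝔢 √|r(x)|/(x − (α_j − δ))² dx ≥ c_1 + c_2/√δ and ∫_𝔢 √|r(x)|/(x − (β_j + δ))² dx ≥ c_1 + c_2/√δ. -/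
/-!
Let `D > 0` bound from below the lengths of the intervals `[α i, β i]` and the gaps between
them. On `[α j, β j]` every factor of `r` other than `(x - α j) * (x - β j)` is at least `D²` in
absolute value, so `|r x| ≥ (x - α j) * (β j - x) * D^(2(p-1))`. For `0 < δ ≤ D / 4` the
interval `[α j + δ, α j + 2δ]` lies in `𝔢`; there `√|r x| ≥ √(δ D^(2p-1) / 2)` while
`(x - (α j - δ))² ≤ 9δ²`, and its length `δ` makes the integral at least of order
`δ · √δ / δ² = 1 / √δ`. The endpoint `β j` is symmetric.
-/

open MeasureTheory Set Filter Topology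

lemma mul_pow_card_pred_le_abs_prod {ι R : Type*} [Fintype ι] [CommRing R] [LinearOrder R]
    [IsStrictOrderedRing R] (f : ι → R) (j : ι) {a b : R} (hb : 0 ≤ b) (hj : a ≤ |f j|)
    (hi : ∀ i ≠ j, b ≤ |f i|) : a * b ^ (Fintype.card ι - 1) ≤ |∏ i, f i| := by
  classical
  rw [Finset.abs_prod, ← Finset.mul_prod_erase _ _ (Finset.mem_univ j)]
  refine mul_le_mul hj ?_ (by positivity) (abs_nonneg _)
  rw [← Finset.card_univ, ← Finset.card_erase_of_mem (Finset.mem_univ j), ← Finset.prod_const]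
  exact Finset.prod_le_prod (fun _ _ => hb) fun i hi' => hi i (Finset.ne_of_mem_erase hi')

lemma mul_le_setIntegral_of_Icc_subset {E : Set ℝ} {f : ℝ → ℝ} {a b c : ℝ} (hE : IsCompact E)
    (hf : ContinuousOn f E) (hf0 : ∀ x ∈ E, 0 ≤ f x) (hab : a ≤ b) (hsub : Icc a b ⊆ E)
    (hc : ∀ x ∈ Icc a b, c ≤ f x) : (b - a) * c ≤ ∫ x in E, f x := by
  have hint : IntegrableOn f E := hf.integrableOn_compact hE
  calc (b - a) * c = ∫ _ in Icc a b, c := by simp [hab]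
    _ ≤ ∫ x in Icc a b, f x :=
      setIntegral_mono_on (integrableOn_const measure_Icc_lt_top.ne) (hint.mono_set hsub)
        measurableSet_Icc hc
    _ ≤ ∫ x in E, f x :=
      setIntegral_mono_set hint ((ae_restrict_iff' hE.measurableSet).2 (Eventually.of_forall hf0))
        hsub.eventuallyLE

lemma mul_div_sq_le_setIntegral {E : Set ℝ} {g : ℝ → ℝ} {ξ a b m L : ℝ} (hE : IsCompact E)
    (hg : ContinuousOn g E) (hg0 : ∀ x ∈ E, 0 ≤ g x) (hξ : ξ ∉ E) (hab : a ≤ b)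
    (hsub : Icc a b ⊆ E) (hm : ∀ x ∈ Icc a b, m ≤ g x) (hL : ∀ x ∈ Icc a b, |x - ξ| ≤ L) :
    (b - a) * (m / L ^ 2) ≤ ∫ x in E, g x / (x - ξ) ^ 2 := by
  have hne : ∀ x ∈ E, (x - ξ) ^ 2 ≠ 0 := fun x hx =>
    pow_ne_zero _ (sub_ne_zero.2 (ne_of_mem_of_not_mem hx hξ))
  refine mul_le_setIntegral_of_Icc_subset hE (hg.div (by fun_prop) hne)
    (fun x hx => div_nonneg (hg0 x hx) (sq_nonneg _)) hab hsub fun x hx => ?_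
  exact div_le_div₀ (hg0 x (hsub hx)) (hm x hx) ((sq_nonneg _).lt_of_ne (hne x (hsub hx)).symm)
    (sq_le_sq.2 ((hL x hx).trans (le_abs_self L)))

lemma mul_sqrt_div_sq_eq {δ M : ℝ} (hδ : 0 < δ) :
    δ * (√(δ * M) / (3 * δ) ^ 2) = √M / 9 / √δ := by
  rw [Real.sqrt_mul hδ.le]
  field_simp
  rw [Real.sq_sqrt hδ.le]
  ring

section GapSet

variable {p : ℕ}

structure GapsAtLeast (α β : Fin p → ℝ) (D : ℝ) : Prop where
  pos : 0 < D
  add_le_right : ∀ i, α i + D ≤ β i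
  add_le_of_lt : ∀ i k, i < k → β i + D ≤ α k

variable {α β : Fin p → ℝ} {D : ℝ}

lemma exists_gapsAtLeast (hαβ : ∀ j, α j < β j)
    (hgap : ∀ j k : Fin p, (j : ℕ) + 1 = (k : ℕ) → β j < α k) : ∃ D, GapsAtLeast α β D := by
  have hchain : ∀ i k : Fin p, i < k → β i < α k := by
    rintro i ⟨k, hk⟩ (hik : (i : ℕ) + 1 ≤ k)
    induction k, hik using Nat.le_induction with
    | base => exact hgap i _ rfl
    | succ m _ ih =>
      exact (ih (by omega)).trans ((hαβ _).trans (hgap ⟨m, by omega⟩ ⟨m + 1, hk⟩ rfl))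
  have hlen : ∀ᶠ D in 𝓝[>] (0 : ℝ), ∀ i, α i + D ≤ β i :=
    eventually_all.2 fun i => nhdsWithin_le_nhds <|
      (eventually_le_nhds (sub_pos.2 (hαβ i))).mono fun D hD => by linarith
  have hsep : ∀ᶠ D in 𝓝[>] (0 : ℝ), ∀ i k, i < k → β i + D ≤ α k :=
    eventually_all.2 fun i => eventually_all.2 fun k => eventually_imp_distrib_left.2 fun hik =>
      nhdsWithin_le_nhds <|
        (eventually_le_nhds (sub_pos.2 (hchain i k hik))).mono fun D hD => by linarith
  obtain ⟨D, hD, hlenD, hsepD⟩ := (eventually_mem_nhdsWithin.and (hlen.and hsep)).exists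
  exact ⟨D, ⟨hD, hlenD, hsepD⟩⟩

namespace GapsAtLeast

variable (h : GapsAtLeast α β D) {i j : Fin p} {x δ : ℝ}
include h

lemma le_abs_sub_left (hij : i ≠ j) (hx : x ∈ Icc (α j) (β j)) : D ≤ |x - α i| := by
  have := h.pos
  rcases hij.lt_or_gt with hlt | hlt
  · have := h.add_le_of_lt i j hlt
    have := h.add_le_right i
    exact le_abs.2 (Or.inl (by linarith [hx.1]))
  · have := h.add_le_of_lt j i hlt
    exact le_abs.2 (Or.inr (by linarith [hx.2]))

lemma le_abs_sub_right (hij : i ≠ j) (hx : x ∈ Icc (α j) (β j)) : D ≤ |x - β i| := by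
  have := h.pos
  rcases hij.lt_or_gt with hlt | hlt
  · have := h.add_le_of_lt i j hlt
    exact le_abs.2 (Or.inl (by linarith [hx.1]))
  · have := h.add_le_of_lt j i hlt
    have := h.add_le_right i
    exact le_abs.2 (Or.inr (by linarith [hx.2]))

lemma mul_le_abs_prod (hx : x ∈ Icc (α j) (β j)) :
    (x - α j) * (β j - x) * (D ^ 2) ^ (p - 1) ≤ |∏ i, (x - α i) * (x - β i)| := by
  have key := mul_pow_card_pred_le_abs_prod (fun i => (x - α i) * (x - β i)) j (sq_nonneg D)
    (a := (x - α j) * (β j - x)) ?_ fun i hi => ?_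
  · simpa using key
  · rw [abs_mul, abs_of_nonneg (sub_nonneg.2 hx.1), abs_of_nonpos (sub_nonpos.2 hx.2), neg_sub]
  · rw [abs_mul, sq]
    exact mul_le_mul (h.le_abs_sub_left hi hx) (h.le_abs_sub_right hi hx) h.pos.le (abs_nonneg _)

lemma sub_notMem_iUnion (hδ : 0 < δ) (hδD : δ < D) (j : Fin p) :
    α j - δ ∉ ⋃ i, Icc (α i) (β i) := by
  simp only [mem_iUnion, mem_Icc, not_exists, not_and_or, not_le]
  intro i
  rcases lt_trichotomy i j with hij | rfl | hij
  · exact Or.inr (by linarith [h.add_le_of_lt i j hij])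
  · exact Or.inl (by linarith)
  · exact Or.inl (by linarith [h.add_le_of_lt j i hij, h.add_le_right j])

lemma add_notMem_iUnion (hδ : 0 < δ) (hδD : δ < D) (j : Fin p) :
    β j + δ ∉ ⋃ i, Icc (α i) (β i) := by
  simp only [mem_iUnion, mem_Icc, not_exists, not_and_or, not_le]
  intro i
  rcases lt_trichotomy i j with hij | rfl | hij
  · exact Or.inr (by linarith [h.add_le_of_lt i j hij, h.add_le_right j, h.pos])
  · exact Or.inr (by linarith)
  · exact Or.inl (by linarith [h.add_le_of_lt j i hij])

lemma sqrt_le_sqrt_abs_prod (hx : x ∈ Icc (α j) (β j))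
    (hxδ : δ * (D / 2) ≤ (x - α j) * (β j - x)) :
    √(δ * (D / 2 * (D ^ 2) ^ (p - 1))) ≤ √|∏ i, (x - α i) * (x - β i)| := by
  refine Real.sqrt_le_sqrt ((le_of_eq (mul_assoc _ _ _).symm).trans ?_)
  exact (mul_le_mul_of_nonneg_right hxδ (by positivity)).trans (h.mul_le_abs_prod hx)

lemma sqrt_div_le_setIntegral_left (hδ : 0 < δ) (hδD : δ ≤ D / 4) (j : Fin p) :
    √(D / 2 * (D ^ 2) ^ (p - 1)) / 9 / √δ ≤ ∫ x in ⋃ i, Icc (α i) (β i),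
      √|∏ i, (x - α i) * (x - β i)| / (x - (α j - δ)) ^ 2 := by
  have hlen := h.add_le_right j
  have hsub : Icc (α j + δ) (α j + 2 * δ) ⊆ Icc (α j) (β j) :=
    Icc_subset_Icc (by linarith) (by linarith)
  have key := mul_div_sq_le_setIntegral (isCompact_iUnion fun _ => isCompact_Icc)
    (by fun_prop) (fun _ _ => Real.sqrt_nonneg _) (h.sub_notMem_iUnion hδ (by linarith) j)
    (by linarith) (hsub.trans (subset_iUnion (fun i => Icc (α i) (β i)) j))
    (fun x hx => h.sqrt_le_sqrt_abs_prod (δ := δ) (hsub hx) ?_) (L := 3 * δ) fun x hx => ?_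
  · rwa [show α j + 2 * δ - (α j + δ) = δ by ring, mul_sqrt_div_sq_eq hδ] at key
  · exact mul_le_mul (by linarith [hx.1]) (by linarith [hx.2]) (by linarith [h.pos])
      (by linarith [hx.1])
  · exact abs_le.2 ⟨by linarith [hx.1], by linarith [hx.2]⟩

lemma sqrt_div_le_setIntegral_right (hδ : 0 < δ) (hδD : δ ≤ D / 4) (j : Fin p) :
    √(D / 2 * (D ^ 2) ^ (p - 1)) / 9 / √δ ≤ ∫ x in ⋃ i, Icc (α i) (β i),
      √|∏ i, (x - α i) * (x - β i)| / (x - (β j + δ)) ^ 2 := by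
  have hlen := h.add_le_right j
  have hsub : Icc (β j - 2 * δ) (β j - δ) ⊆ Icc (α j) (β j) :=
    Icc_subset_Icc (by linarith) (by linarith)
  have key := mul_div_sq_le_setIntegral (isCompact_iUnion fun _ => isCompact_Icc)
    (by fun_prop) (fun _ _ => Real.sqrt_nonneg _) (h.add_notMem_iUnion hδ (by linarith) j)
    (by linarith) (hsub.trans (subset_iUnion (fun i => Icc (α i) (β i)) j))
    (fun x hx => h.sqrt_le_sqrt_abs_prod (δ := δ) (hsub hx) ?_) (L := 3 * δ) fun x hx => ?_
  · rwa [show β j - δ - (β j - 2 * δ) = δ by ring, mul_sqrt_div_sq_eq hδ] at key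
  · rw [mul_comm δ]
    exact mul_le_mul (by linarith [hx.1]) (by linarith [hx.2]) hδ.le (by linarith [hx.1])
  · exact abs_le.2 ⟨by linarith [hx.1], by linarith [hx.2]⟩

end GapsAtLeast

end GapSet

theorem stmt_9_general (p : ℕ) (α β : Fin p → ℝ)
    (hαβ : ∀ j, α j < β j)
    (hgap : ∀ j k : Fin p, (j : ℕ) + 1 = (k : ℕ) → β j < α k) :
    ∃ c₁ : ℝ, ∃ c₂ : ℝ, 0 < c₂ ∧ ∃ δ₁ : ℝ, 0 < δ₁ ∧
      ∀ δ : ℝ, 0 < δ → δ < δ₁ → ∀ j : Fin p,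
        (c₁ + c₂ / Real.sqrt δ ≤
            ∫ x in ⋃ i, Set.Icc (α i) (β i),
              Real.sqrt |∏ i, (x - α i) * (x - β i)| / (x - (α j - δ)) ^ 2) ∧
        (c₁ + c₂ / Real.sqrt δ ≤
            ∫ x in ⋃ i, Set.Icc (α i) (β i),
              Real.sqrt |∏ i, (x - α i) * (x - β i)| / (x - (β j + δ)) ^ 2) := by
  obtain ⟨D, hD⟩ := exists_gapsAtLeast hαβ hgap
  have hD0 := hD.pos
  refine ⟨0, √(D / 2 * (D ^ 2) ^ (p - 1)) / 9, by positivity, D / 4, by positivity,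
    fun δ hδ hδD j => ?_⟩
  rw [zero_add]
  exact ⟨hD.sqrt_div_le_setIntegral_left hδ hδD.le j,
    hD.sqrt_div_le_setIntegral_right hδ hδD.le j⟩

/-- Lower bound `c₁ + c₂/√δ` for the integrals `∫_𝔢 √|r(x)| / (x - (α_j - δ))² dx`
and `∫_𝔢 √|r(x)| / (x - (β_j + δ))² dx`, uniformly in `j` and small `δ > 0`. -/
theorem stmt_9 (p : ℕ) (hp : 1 ≤ p) (α β : Fin p → ℝ)
    (hαβ : ∀ j, α j < β j)
    (hgap : ∀ j k : Fin p, (j : ℕ) + 1 = (k : ℕ) → β j < α k) :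
    ∃ c₁ : ℝ, ∃ c₂ : ℝ, 0 < c₂ ∧ ∃ δ₁ : ℝ, 0 < δ₁ ∧
      ∀ δ : ℝ, 0 < δ → δ < δ₁ → ∀ j : Fin p,
        (c₁ + c₂ / Real.sqrt δ ≤
            ∫ x in ⋃ i, Set.Icc (α i) (β i),
              Real.sqrt |∏ i, (x - α i) * (x - β i)| / (x - (α j - δ)) ^ 2) ∧
        (c₁ + c₂ / Real.sqrt δ ≤
            ∫ x in ⋃ i, Set.Icc (α i) (β i),
              Real.sqrt |∏ i, (x - α i) * (x - β i)| / (x - (β j + δ)) ^ 2) :=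
  stmt_9_general p α β hαβ hgap
end

section
/- Fix p ≥ 1 and real numbers α_1 < β_1 < α_2 < β_2 < ⋯ < α_p < β_p, set 𝔢 = ⋃_{j=1}^p [α_j, β_j] and r(x) = ∏_{j=1}^p (x − α_j)(x − β_j). Then there exist constants c_1 ∈ ℝ, c_2 > 0 and δ_1 > 0 such that for every δ with 0 < δ < δ_1 and every real x_0 ∈ ⋃_{j=1}^p (α_j − δ, β_j + δ): ∫_𝔢 √|r(x)|/((x − x_0)² + δ²) dx ≥ c_1 + c_2/√δ. -/
/-! On a band `[α_j, β_j]` whose `δ`-neighbourhood contains `x₀`, the factors of `r` belonging to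
the other bands are bounded away from zero, so `|r(x)| ≳ (x - α_j)(β_j - x)`. Inside that band,
within `4δ` of `x₀` and at distance `≥ δ` from its ends, there is an interval of length `2δ`; on it
`|r| ≳ δ` and the denominator is `≤ 17δ²`, so the integral is at least `2δ · √δ / δ² = 2 / √δ` up to
a constant. Minima over the finitely many bands make the constants uniform. -/

open MeasureTheory Set Real

lemma exists_pos_forall_le_of_finite {ι : Type*} [Finite ι] (f : ι → ℝ) (hf : ∀ i, 0 < f i) :
    ∃ ε > 0, ∀ i, ε ≤ f i := by
  rcases isEmpty_or_nonempty ι with hι | hι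
  · exact ⟨1, one_pos, isEmptyElim⟩
  · obtain ⟨i, hi⟩ := Finite.exists_min f
    exact ⟨f i, hf i, hi⟩

lemma le_setIntegral_of_Icc_subset {f : ℝ → ℝ} {S : Set ℝ} {u v C : ℝ} (huv : u ≤ v)
    (hf : IntegrableOn f S) (hf0 : 0 ≤ f) (hsub : Icc u v ⊆ S) (hC : ∀ x ∈ Icc u v, C ≤ f x) :
    C * (v - u) ≤ ∫ x in S, f x := calc
  C * (v - u) = C * volume.real (Icc u v) := by rw [volume_real_Icc_of_le huv]
  _ ≤ ∫ x in Icc u v, f x :=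
    setIntegral_ge_of_const_le_real measurableSet_Icc (by simp) hC (hf.mono_set hsub)
  _ ≤ ∫ x in S, f x := setIntegral_mono_set hf (.of_forall hf0) hsub.eventuallyLE

lemma exists_Icc_subset_inter_Icc {a b δ x₀ : ℝ} (hδ : 0 ≤ δ) (hδab : 4 * δ ≤ b - a)
    (hx₀ : x₀ ∈ Ioo (a - δ) (b + δ)) :
    ∃ t, Icc (t - δ) (t + δ) ⊆ Icc (a + δ) (b - δ) ∩ Icc (x₀ - 4 * δ) (x₀ + 4 * δ) := by
  obtain ⟨h₁, h₂⟩ := hx₀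
  set t := max (a + 2 * δ) (min x₀ (b - 2 * δ))
  have ht₁ : a + 2 * δ ≤ t := le_max_left _ _
  have ht₂ : t ≤ b - 2 * δ := max_le (by linarith) (min_le_right _ _)
  have ht₃ : x₀ - 3 * δ ≤ t := le_max_of_le_right (le_min (by linarith) (by linarith))
  have ht₄ : t ≤ x₀ + 3 * δ := max_le (by linarith) ((min_le_left _ _).trans (by linarith))
  exact ⟨t, fun x ⟨hx₁, hx₂⟩ => ⟨⟨by linarith, by linarith⟩, by linarith, by linarith⟩⟩

lemma le_setIntegral_sqrt_abs_div {S : Set ℝ} (hS : IsCompact S) {R : ℝ → ℝ} (hR : Continuous R)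
    {a b m δ x₀ : ℝ} (hm : 0 ≤ m) (hab : Icc a b ⊆ S)
    (hRab : ∀ x ∈ Icc a b, m * ((x - a) * (b - x)) ≤ |R x|) (hδ : 0 < δ) (hδab : 4 * δ ≤ b - a)
    (hx₀ : x₀ ∈ Ioo (a - δ) (b + δ)) :
    2 / 17 * √(m * (b - a) / 2) / √δ ≤ ∫ x in S, √|R x| / ((x - x₀) ^ 2 + δ ^ 2) := by
  obtain ⟨t, ht⟩ := exists_Icc_subset_inter_Icc hδ.le hδab hx₀
  have hpoint : ∀ x ∈ Icc (t - δ) (t + δ),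
      √(m * (b - a) / 2 * δ) / (17 * δ ^ 2) ≤ √|R x| / ((x - x₀) ^ 2 + δ ^ 2) := by
    intro x hx
    obtain ⟨⟨hxa, hxb⟩, hx₁, hx₂⟩ := ht hx
    have hband : δ * (b - a) / 2 ≤ (x - a) * (b - x) := by nlinarith
    have hnum : m * (b - a) / 2 * δ ≤ |R x| :=
      (by nlinarith : m * (b - a) / 2 * δ ≤ m * ((x - a) * (b - x))).trans
        (hRab x ⟨by linarith, by linarith⟩)
    have hden : (x - x₀) ^ 2 + δ ^ 2 ≤ 17 * δ ^ 2 := by nlinarith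
    exact div_le_div₀ (sqrt_nonneg _) (sqrt_le_sqrt hnum) (by positivity) hden
  have hsub : Icc (t - δ) (t + δ) ⊆ S :=
    (ht.trans inter_subset_left).trans ((Icc_subset_Icc (by linarith) (by linarith)).trans hab)
  have hcont : Continuous fun x => √|R x| / ((x - x₀) ^ 2 + δ ^ 2) :=
    hR.abs.sqrt.div (by fun_prop) fun x => by positivity
  calc 2 / 17 * √(m * (b - a) / 2) / √δ
      = √(m * (b - a) / 2 * δ) / (17 * δ ^ 2) * ((t + δ) - (t - δ)) := by
        obtain ⟨s, hs, rfl⟩ : ∃ s, 0 < s ∧ δ = s ^ 2 := ⟨√δ, sqrt_pos.2 hδ, (sq_sqrt hδ.le).symm⟩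
        rw [sqrt_mul' _ hδ.le, sqrt_sq hs.le]
        field_simp
        ring
    _ ≤ _ := le_setIntegral_of_Icc_subset (by linarith) (hcont.continuousOn.integrableOn_compact hS)
        (fun x => by positivity) hsub hpoint

section Bands

variable {p : ℕ} {α β : Fin p → ℝ}

lemma band_lt_of_lt (hαβ : ∀ j, α j < β j)
    (hgap : ∀ j k : Fin p, (j : ℕ) + 1 = (k : ℕ) → β j < α k) {j k : Fin p} (hjk : j < k) :
    β j < α k := by
  obtain ⟨k, hk⟩ := k
  induction k with
  | zero => exact absurd (Fin.lt_def.1 hjk) (Nat.not_lt_zero _)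
  | succ n ih =>
    rcases (Nat.lt_succ_iff_lt_or_eq.1 (Fin.lt_def.1 hjk)) with h | h
    · exact (ih (by omega) (Fin.lt_def.2 h)).trans ((hαβ _).trans (hgap _ _ rfl))
    · exact hgap j _ (by simp [h])

lemma prod_erase_ne_zero_of_mem_Icc (hαβ : ∀ j, α j < β j)
    (hgap : ∀ j k : Fin p, (j : ℕ) + 1 = (k : ℕ) → β j < α k) {j : Fin p} {x : ℝ}
    (hx : x ∈ Icc (α j) (β j)) :
    ∏ i ∈ Finset.univ.erase j, (x - α i) * (x - β i) ≠ 0 := by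
  refine Finset.prod_ne_zero_iff.2 fun i hi => (?_ : 0 < (x - α i) * (x - β i)).ne'
  have := hαβ i
  rcases lt_or_gt_of_ne (Finset.ne_of_mem_erase hi) with h | h
  · have := band_lt_of_lt hαβ hgap h
    exact mul_pos (by linarith [hx.1]) (by linarith [hx.1])
  · have := band_lt_of_lt hαβ hgap h
    exact mul_pos_of_neg_of_neg (by linarith [hx.2]) (by linarith [hx.2])

lemma exists_pos_mul_le_abs_prod (hαβ : ∀ j, α j < β j)
    (hgap : ∀ j k : Fin p, (j : ℕ) + 1 = (k : ℕ) → β j < α k) (j : Fin p) :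
    ∃ m > 0, ∀ x ∈ Icc (α j) (β j),
      m * ((x - α j) * (β j - x)) ≤ |∏ i, (x - α i) * (x - β i)| := by
  obtain ⟨m, hm, hmle⟩ := isCompact_Icc.exists_forall_le'
    (f := fun x => |∏ i ∈ Finset.univ.erase j, (x - α i) * (x - β i)|) (by fun_prop)
    fun x hx => abs_pos.2 (prod_erase_ne_zero_of_mem_Icc hαβ hgap hx)
  refine ⟨m, hm, fun x hx => ?_⟩
  have hband : 0 ≤ (x - α j) * (β j - x) := mul_nonneg (by linarith [hx.1]) (by linarith [hx.2])
  rw [← Finset.mul_prod_erase _ _ (Finset.mem_univ j), abs_mul,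
    show |(x - α j) * (x - β j)| = (x - α j) * (β j - x) by rw [abs_of_nonpos (by nlinarith)]; ring]
  nlinarith [hmle x hx]

lemma exists_band_integral_lower_bound (hαβ : ∀ j, α j < β j)
    (hgap : ∀ j k : Fin p, (j : ℕ) + 1 = (k : ℕ) → β j < α k) (j : Fin p) :
    ∃ c > 0, ∃ δ₀ > 0, ∀ δ, 0 < δ → δ < δ₀ → ∀ x₀ ∈ Ioo (α j - δ) (β j + δ),
      c / √δ ≤ ∫ x in ⋃ i, Icc (α i) (β i),
        √|∏ i, (x - α i) * (x - β i)| / ((x - x₀) ^ 2 + δ ^ 2) := by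
  obtain ⟨m, hm, hmle⟩ := exists_pos_mul_le_abs_prod hαβ hgap j
  have hlen := hαβ j
  refine ⟨2 / 17 * √(m * (β j - α j) / 2), by positivity, (β j - α j) / 4, by linarith,
    fun δ hδ hδ₀ x₀ hx₀ => ?_⟩
  exact le_setIntegral_sqrt_abs_div (isCompact_iUnion fun _ => isCompact_Icc) (by fun_prop)
    hm.le (subset_iUnion (fun i => Icc (α i) (β i)) j) hmle hδ (by linarith) hx₀

end Bands

theorem stmt_10_general (p : ℕ) (α β : Fin p → ℝ)
    (hαβ : ∀ j, α j < β j)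
    (hgap : ∀ j k : Fin p, (j : ℕ) + 1 = (k : ℕ) → β j < α k) :
    ∃ c₁ : ℝ, ∃ c₂ : ℝ, 0 < c₂ ∧ ∃ δ₁ : ℝ, 0 < δ₁ ∧
      ∀ δ : ℝ, 0 < δ → δ < δ₁ →
        ∀ x₀ ∈ ⋃ j, Set.Ioo (α j - δ) (β j + δ),
          c₁ + c₂ / Real.sqrt δ ≤
            ∫ x in ⋃ i, Set.Icc (α i) (β i),
              Real.sqrt |∏ i, (x - α i) * (x - β i)| / ((x - x₀) ^ 2 + δ ^ 2) := by
  choose c hc δ₀ hδ₀ hbound using exists_band_integral_lower_bound hαβ hgap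
  obtain ⟨c₂, hc₂, hc₂le⟩ := exists_pos_forall_le_of_finite c hc
  obtain ⟨δ₁, hδ₁, hδ₁le⟩ := exists_pos_forall_le_of_finite δ₀ hδ₀
  refine ⟨0, c₂, hc₂, δ₁, hδ₁, fun δ hδ hδδ₁ x₀ hx₀ => ?_⟩
  obtain ⟨j, hj⟩ := mem_iUnion.1 hx₀
  calc 0 + c₂ / √δ ≤ c j / √δ := by
        rw [zero_add]
        exact div_le_div_of_nonneg_right (hc₂le j) (sqrt_nonneg δ)
    _ ≤ _ := hbound j δ hδ (hδδ₁.trans_le (hδ₁le j)) x₀ hj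

/-- Lower bound `c₁ + c₂/√δ` for the integrals `∫_𝔢 √|r(x)| /((x - x₀)² + δ²) dx`,
uniformly over `x₀ ∈ ⋃_j (α_j - δ, β_j + δ)` and small `δ > 0`. -/
theorem stmt_10 (p : ℕ) (hp : 1 ≤ p) (α β : Fin p → ℝ)
    (hαβ : ∀ j, α j < β j)
    (hgap : ∀ j k : Fin p, (j : ℕ) + 1 = (k : ℕ) → β j < α k) :
    ∃ c₁ : ℝ, ∃ c₂ : ℝ, 0 < c₂ ∧ ∃ δ₁ : ℝ, 0 < δ₁ ∧
      ∀ δ : ℝ, 0 < δ → δ < δ₁ →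
        ∀ x₀ ∈ ⋃ j, Set.Ioo (α j - δ) (β j + δ),
          c₁ + c₂ / Real.sqrt δ ≤
            ∫ x in ⋃ i, Set.Icc (α i) (β i),
              Real.sqrt |∏ i, (x - α i) * (x - β i)| / ((x - x₀) ^ 2 + δ ^ 2) :=
  stmt_10_general p α β hαβ hgap
end

section
/- Let L ≥ 1, ε ≥ 0, and let m, m̃ : ℕ → ℝ be sequences satisfying |m_k| ≤ L^k, |m̃_k| ≤ L^k and |m_k − m̃_k| ≤ L^k·ε for all k. Then for every n ≥ 1 the Hankel determinants satisfy |h_n(m) − h_n(m̃)| ≤ n! · n · L^{n(n−1)} · ε. -/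
/-!
Expand both determinants by the Leibniz formula and compare them permutation by permutation.
The term of `σ` is a product of the `n` entries `m (σ i + i)`, and the exponents `σ i + i` sum to
`2 (0 + 1 + ⋯ + (n - 1)) = n (n - 1)` whatever `σ` is. Telescoping the difference of two products
of `n` factors, each bounded by `L ^ (σ i + i)` and differing by at most `L ^ (σ i + i) ε`, bounds
each term difference by `n L ^ (n (n - 1)) ε`; summing over the `n!` permutations gives the claim.
-/

/-- The `n`-th Hankel determinant of the moment sequence `m`: the determinant of
the `n × n` matrix with `(i,j)`-entry `m (i + j)` (indices `0 ≤ i, j ≤ n-1`). -/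
noncomputable def hankelDet (m : ℕ → ℝ) (n : ℕ) : ℝ :=
  Matrix.det (Matrix.of fun i j : Fin n => m ((i : ℕ) + (j : ℕ)))

open Finset

theorem Finset.abs_prod_sub_prod_le {ι : Type*} [DecidableEq ι] (s : Finset ι) {a b c : ι → ℝ}
    {ε : ℝ} (hε : 0 ≤ ε) (ha : ∀ i ∈ s, |a i| ≤ c i) (hb : ∀ i ∈ s, |b i| ≤ c i)
    (hab : ∀ i ∈ s, |a i - b i| ≤ c i * ε) :
    |∏ i ∈ s, a i - ∏ i ∈ s, b i| ≤ #s * (∏ i ∈ s, c i) * ε := by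
  induction s using Finset.induction_on with
  | empty => simp
  | @insert j s hj ih =>
    simp only [mem_insert, forall_eq_or_imp] at ha hb hab
    have hc : ∀ i ∈ s, 0 ≤ c i := fun i hi => (abs_nonneg _).trans (ha.2 i hi)
    have hprod_b : |∏ i ∈ s, b i| ≤ ∏ i ∈ s, c i := by
      rw [abs_prod]
      exact prod_le_prod (fun i _ => abs_nonneg _) hb.2
    have hcj : 0 ≤ c j := (abs_nonneg _).trans ha.1
    have hprod_c : 0 ≤ ∏ i ∈ s, c i := prod_nonneg hc
    rw [prod_insert hj, prod_insert hj, prod_insert hj, card_insert_of_notMem hj]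
    calc |a j * ∏ i ∈ s, a i - b j * ∏ i ∈ s, b i|
        = |a j * (∏ i ∈ s, a i - ∏ i ∈ s, b i) + (a j - b j) * ∏ i ∈ s, b i| := by ring_nf
      _ ≤ |a j| * |∏ i ∈ s, a i - ∏ i ∈ s, b i| + |a j - b j| * |∏ i ∈ s, b i| := by
        rw [← abs_mul, ← abs_mul]
        exact abs_add_le _ _
      _ ≤ c j * (#s * (∏ i ∈ s, c i) * ε) + c j * ε * ∏ i ∈ s, c i := by
        gcongr
        exacts [ha.1, ih ha.2 hb.2 hab.2, hab.1]
      _ = (#s + 1 : ℕ) * (c j * ∏ i ∈ s, c i) * ε := by push_cast; ring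

theorem Matrix.abs_det_sub_det_le {ι : Type*} [Fintype ι] [DecidableEq ι] {A B C : Matrix ι ι ℝ}
    {K ε : ℝ} (hε : 0 ≤ ε) (hA : ∀ i j, |A i j| ≤ C i j) (hB : ∀ i j, |B i j| ≤ C i j)
    (hAB : ∀ i j, |A i j - B i j| ≤ C i j * ε) (hK : ∀ σ : Equiv.Perm ι, ∏ i, C (σ i) i ≤ K) :
    |A.det - B.det| ≤ (Fintype.card ι).factorial * Fintype.card ι * K * ε := by
  have hterm (σ : Equiv.Perm ι) :
      |(Equiv.Perm.sign σ : ℝ) * ∏ i, A (σ i) i - (Equiv.Perm.sign σ : ℝ) * ∏ i, B (σ i) i|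
        ≤ Fintype.card ι * K * ε := by
    rw [← mul_sub, abs_mul, abs_unit_intCast, one_mul]
    calc |∏ i, A (σ i) i - ∏ i, B (σ i) i| ≤ Fintype.card ι * (∏ i, C (σ i) i) * ε :=
          abs_prod_sub_prod_le univ hε (fun i _ => hA _ _) (fun i _ => hB _ _)
            (fun i _ => hAB _ _)
      _ ≤ Fintype.card ι * K * ε := by gcongr; exact hK σ
  calc |A.det - B.det|
      ≤ ∑ σ : Equiv.Perm ι, |(Equiv.Perm.sign σ : ℝ) * ∏ i, A (σ i) i
          - (Equiv.Perm.sign σ : ℝ) * ∏ i, B (σ i) i| := by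
        rw [Matrix.det_apply', Matrix.det_apply', ← sum_sub_distrib]
        exact abs_sum_le_sum_abs _ _
    _ ≤ ∑ _σ : Equiv.Perm ι, (Fintype.card ι * K * ε : ℝ) := sum_le_sum fun σ _ => hterm σ
    _ = (Fintype.card ι).factorial * Fintype.card ι * K * ε := by
        rw [sum_const, card_univ, Fintype.card_perm, nsmul_eq_mul]
        ring

theorem Equiv.Perm.sum_val_apply_add_val {n : ℕ} (σ : Equiv.Perm (Fin n)) :
    ∑ i, ((σ i : ℕ) + i) = n * (n - 1) := by
  rw [sum_add_distrib, Equiv.sum_comp σ (fun i : Fin n => (i : ℕ)), ← two_mul,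
    Fin.sum_univ_eq_sum_range (fun i => i) n, mul_comm, sum_range_id_mul_two]

theorem stmt_11_general (L ε : ℝ) (hε : 0 ≤ ε) (m mt : ℕ → ℝ)
    (hm : ∀ k, |m k| ≤ L ^ k) (hmt : ∀ k, |mt k| ≤ L ^ k)
    (hclose : ∀ k, |m k - mt k| ≤ L ^ k * ε) :
    ∀ n : ℕ, 1 ≤ n →
      |hankelDet m n - hankelDet mt n| ≤
        (n.factorial : ℝ) * n * L ^ (n * (n - 1)) * ε := by
  intro n _
  have hprod (σ : Equiv.Perm (Fin n)) : ∏ i, L ^ ((σ i : ℕ) + i) = L ^ (n * (n - 1)) := by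
    rw [prod_pow_eq_pow_sum, σ.sum_val_apply_add_val]
  have h := Matrix.abs_det_sub_det_le (A := Matrix.of fun i j : Fin n => m (i + j))
    (B := Matrix.of fun i j : Fin n => mt (i + j)) (C := Matrix.of fun i j => L ^ ((i : ℕ) + j))
    hε (fun _ _ => hm _) (fun _ _ => hmt _) (fun _ _ => hclose _) (fun σ => (hprod σ).le)
  rwa [Fintype.card_fin] at h

/-- If `|m_k| ≤ L^k`, `|m̃_k| ≤ L^k` and `|m_k - m̃_k| ≤ L^k ε` for all `k`, then
for every `n ≥ 1` the Hankel determinants satisfy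
`|h_n(m) - h_n(m̃)| ≤ n! · n · L^(n(n-1)) · ε`. -/
theorem stmt_11 (L ε : ℝ) (hL : 1 ≤ L) (hε : 0 ≤ ε) (m mt : ℕ → ℝ)
    (hm : ∀ k, |m k| ≤ L ^ k) (hmt : ∀ k, |mt k| ≤ L ^ k)
    (hclose : ∀ k, |m k - mt k| ≤ L ^ k * ε) :
    ∀ n : ℕ, 1 ≤ n →
      |hankelDet m n - hankelDet mt n| ≤
        (n.factorial : ℝ) * n * L ^ (n * (n - 1)) * ε :=
  stmt_11_general L ε hε m mt hm hmt hclose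
end

section
/- Let a < b ≤ E be real numbers and let f : ℝ → ℝ be analytic on an open set U containing the closed interval [a, E]. Suppose that f(x) > 0 for all x in the open interval (a, b), that f(E) = 0 with f′(E) ≠ 0, and that the zeros of f in [b, E), counted with their analytic multiplicities, are finite in number with even total count. Then f′(E) < 0. -/
/-!
Dividing `f` by `P x = ∏_{w ∈ Z} (x - w) ^ mult w` removes all its zeros in `(a, E)`: the quotient
extends continuously and without zeros to `(a, E)`, so it has constant sign there. On the band,
left of every zero, `P` has the sign `(-1) ^ ∑ mult = 1`, so the quotient is positive; right of
every zero `P` is positive too, hence `f > 0 = f E` just left of `E`, forcing `f' E ≤ 0`.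
-/

open Set Filter Topology Finset

section ProdSubPow

theorem prod_sub_pow_ne_zero {𝕜 : Type*} [Field 𝕜] {Z : Finset 𝕜} (m : 𝕜 → ℕ) {x : 𝕜}
    (hx : x ∉ Z) : ∏ w ∈ Z, (x - w) ^ m w ≠ 0 :=
  prod_ne_zero_iff.2 fun _ hw => pow_ne_zero _ (sub_ne_zero.2 fun h => hx (h ▸ hw))

variable {R : Type*} [CommRing R] [LinearOrder R] [IsStrictOrderedRing R] {Z : Finset R}
  {m : R → ℕ} {x : R}

theorem prod_sub_pow_pos_of_forall_lt (hx : ∀ w ∈ Z, w < x) : 0 < ∏ w ∈ Z, (x - w) ^ m w :=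
  prod_pos fun w hw => pow_pos (sub_pos.2 (hx w hw)) _

theorem prod_sub_pow_pos_of_forall_gt (hx : ∀ w ∈ Z, x < w) (heven : Even (∑ w ∈ Z, m w)) :
    0 < ∏ w ∈ Z, (x - w) ^ m w := by
  have hneg : ∀ w ∈ Z, (x - w) ^ m w = (-1) ^ m w * (w - x) ^ m w := fun w _ => by
    rw [← mul_pow, neg_one_mul, neg_sub]
  rw [prod_congr rfl hneg, prod_mul_distrib, prod_pow_eq_pow_sum, heven.neg_one_pow, one_mul]
  exact prod_pos fun w hw => pow_pos (sub_pos.2 (hx w hw)) _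

end ProdSubPow

/-- `g z` stands for the cofactor in a local factorization `f = (· - z) ^ m z * g z` at `z ∈ Z`;
it supplies the value of the quotient at `z`. -/
noncomputable def zeroFreeCofactor {𝕜 : Type*} [Field 𝕜] [DecidableEq 𝕜] (f : 𝕜 → 𝕜)
    (Z : Finset 𝕜) (m : 𝕜 → ℕ) (g : 𝕜 → 𝕜 → 𝕜) (x : 𝕜) : 𝕜 :=
  if x ∈ Z then g x x / ∏ w ∈ Z.erase x, (x - w) ^ m w else f x / ∏ w ∈ Z, (x - w) ^ m w

section ZeroFreeCofactor

variable {𝕜 : Type*} [NormedField 𝕜] [DecidableEq 𝕜] {f : 𝕜 → 𝕜} {Z : Finset 𝕜} {m : 𝕜 → ℕ}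
  {g : 𝕜 → 𝕜 → 𝕜}

theorem eq_prod_mul_zeroFreeCofactor {x : 𝕜} (hx : x ∉ Z) :
    f x = (∏ w ∈ Z, (x - w) ^ m w) * zeroFreeCofactor f Z m g x := by
  rw [zeroFreeCofactor, if_neg hx, mul_div_cancel₀ _ (prod_sub_pow_ne_zero m hx)]

theorem zeroFreeCofactor_eventuallyEq_of_mem {z : 𝕜} (hz : z ∈ Z)
    (hfg : ∀ᶠ y in 𝓝 z, f y = (y - z) ^ m z * g z y) :
    zeroFreeCofactor f Z m g =ᶠ[𝓝 z] fun y => g z y / ∏ w ∈ Z.erase z, (y - w) ^ m w := by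
  have hnhds : (↑(Z.erase z) : Set 𝕜)ᶜ ∈ 𝓝 z :=
    (Z.erase z).finite_toSet.isClosed.isOpen_compl.mem_nhds (notMem_erase z Z)
  filter_upwards [hnhds, hfg] with y hy hfy
  rcases eq_or_ne y z with rfl | hyz
  · rw [zeroFreeCofactor, if_pos hz]
  have hyZ : y ∉ Z := fun hyZ => hy (mem_erase.2 ⟨hyz, hyZ⟩)
  rw [zeroFreeCofactor, if_neg hyZ, hfy, ← mul_prod_erase Z (fun w => (y - w) ^ m w) hz,
    mul_div_mul_left _ _ (pow_ne_zero _ (sub_ne_zero.2 hyz))]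

theorem continuousAt_zeroFreeCofactor (hg : ∀ z ∈ Z, ContinuousAt (g z) z)
    (hfg : ∀ z ∈ Z, ∀ᶠ y in 𝓝 z, f y = (y - z) ^ m z * g z y) {x : 𝕜}
    (hf : x ∉ Z → ContinuousAt f x) : ContinuousAt (zeroFreeCofactor f Z m g) x := by
  by_cases hx : x ∈ Z
  · refine ContinuousAt.congr ?_ (zeroFreeCofactor_eventuallyEq_of_mem hx (hfg x hx)).symm
    exact (hg x hx).div (by fun_prop) (prod_sub_pow_ne_zero m (notMem_erase x Z))
  · refine ContinuousAt.congr (f := fun y => f y / ∏ w ∈ Z, (y - w) ^ m w) ?_ ?_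
    · exact (hf hx).div (by fun_prop) (prod_sub_pow_ne_zero m hx)
    · filter_upwards [Z.finite_toSet.isClosed.isOpen_compl.mem_nhds hx] with y (hy : y ∉ Z)
      rw [zeroFreeCofactor, if_neg hy]

theorem zeroFreeCofactor_ne_zero (hg : ∀ z ∈ Z, g z z ≠ 0) {x : 𝕜} (hf : x ∉ Z → f x ≠ 0) :
    zeroFreeCofactor f Z m g x ≠ 0 := by
  by_cases hx : x ∈ Z
  · rw [zeroFreeCofactor, if_pos hx]
    exact div_ne_zero (hg x hx) (prod_sub_pow_ne_zero m (notMem_erase x Z))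
  · rw [zeroFreeCofactor, if_neg hx]
    exact div_ne_zero (hf hx) (prod_sub_pow_ne_zero m hx)

end ZeroFreeCofactor

theorem IsPreconnected.forall_pos_of_ne_zero {X α : Type*} [TopologicalSpace X]
    [TopologicalSpace α] [LinearOrder α] [OrderClosedTopology α] [Zero α] {s : Set X}
    (hs : IsPreconnected s) {h : X → α} (hc : ContinuousOn h s) (hne : ∀ x ∈ s, h x ≠ 0)
    {x₀ : X} (hx₀ : x₀ ∈ s) (hpos : 0 < h x₀) : ∀ x ∈ s, 0 < h x := by
  intro x hx
  by_contra! hle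
  obtain ⟨y, hy, hy0⟩ := hs.intermediate_value hx hx₀ hc ⟨hle, hpos.le⟩
  exact hne y hy hy0

theorem HasDerivWithinAt.nonpos_of_eventually_le {f : ℝ → ℝ} {f' x : ℝ}
    (hf : HasDerivWithinAt f f' (Iio x) x) (hle : ∀ᶠ y in 𝓝[<] x, f x ≤ f y) : f' ≤ 0 := by
  refine le_of_tendsto ((hasDerivWithinAt_iff_tendsto_slope' self_notMem_Iio).1 hf) ?_
  filter_upwards [hle, self_mem_nhdsWithin] with y hfy hy
  rw [slope_def_field]
  exact div_nonpos_of_nonneg_of_nonpos (sub_nonneg.2 hfy) (sub_nonpos.2 (le_of_lt hy))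

theorem stmt_15_general (a b E : ℝ) (hab : a < b) (hbE : b ≤ E)
    (U : Set ℝ) (hIU : Set.Icc a E ⊆ U)
    (f : ℝ → ℝ) (hf : AnalyticOnNhd ℝ f U)
    (hpos : ∀ x ∈ Set.Ioo a b, 0 < f x)
    (hfE : f E = 0) (hfE' : deriv f E ≠ 0)
    (Z : Finset ℝ) (hZ : ∀ x : ℝ, x ∈ Z ↔ x ∈ Set.Ico b E ∧ f x = 0)
    (mult : ℝ → ℕ)
    (hmult : ∀ x ∈ Z, 1 ≤ mult x ∧
      ∃ g : ℝ → ℝ, AnalyticAt ℝ g x ∧ g x ≠ 0 ∧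
        ∀ᶠ y in nhds x, f y = (y - x) ^ mult x * g y)
    (heven : Even (∑ x ∈ Z, mult x)) :
    deriv f E < 0 := by
  classical
  choose! g hg hgz hfg using fun z hz => (hmult z hz).2
  set h := zeroFreeCofactor f Z mult g
  have hbZ : ∀ x < b, ∀ w ∈ Z, x < w := fun x hx w hw => hx.trans_le ((hZ w).1 hw).1.1
  have hh_pos_band : 0 < h ((a + b) / 2) := by
    have hx₀ : (a + b) / 2 ∈ Ioo a b := ⟨by linarith, by linarith⟩
    have hP := prod_sub_pow_pos_of_forall_gt (m := mult) (hbZ _ hx₀.2) heven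
    have hx₀Z : (a + b) / 2 ∉ Z := fun hx => lt_irrefl _ (hbZ _ hx₀.2 _ hx)
    exact (mul_pos_iff_of_pos_left hP).1 (eq_prod_mul_zeroFreeCofactor hx₀Z ▸ hpos _ hx₀)
  have hh_pos : ∀ x ∈ Ioo a E, 0 < h x := by
    refine isPreconnected_Ioo.forall_pos_of_ne_zero (fun x hx => ?_) (fun x hx => ?_)
      ⟨by linarith, by linarith⟩ hh_pos_band
    · refine (continuousAt_zeroFreeCofactor (fun z hz => (hg z hz).continuousAt) hfg
        fun _ => ?_).continuousWithinAt
      exact (hf x (hIU (Ioo_subset_Icc_self hx))).continuousAt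
    · refine zeroFreeCofactor_ne_zero hgz fun hxZ hfx => ?_
      rcases lt_or_ge x b with hxb | hbx
      · exact (hpos x ⟨hx.1, hxb⟩).ne' hfx
      · exact hxZ ((hZ x).2 ⟨⟨hbx, hx.2⟩, hfx⟩)
  have hf_pos_left : ∀ᶠ x in 𝓝[<] E, f E ≤ f x := by
    have hZE : ∀ᶠ x in 𝓝[<] E, ∀ w ∈ Z, w < x := (eventually_all_finset Z).2 fun w hw =>
      (eventually_gt_nhds ((hZ w).1 hw).1.2).filter_mono nhdsWithin_le_nhds
    filter_upwards [hZE, Ioo_mem_nhdsLT (hab.trans_le hbE)] with x hxZ hx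
    have hxZ' : x ∉ Z := fun hx' => lt_irrefl x (hxZ x hx')
    rw [hfE, eq_prod_mul_zeroFreeCofactor (f := f) (g := g) hxZ']
    exact (mul_pos (prod_sub_pow_pos_of_forall_lt hxZ) (hh_pos x hx)).le
  have hdE := (hf E (hIU ⟨(hab.trans_le hbE).le, le_rfl⟩)).differentiableAt.hasDerivAt
  exact (hdE.hasDerivWithinAt.nonpos_of_eventually_le hf_pos_left).lt_of_ne hfE'

/-- If `f` is real-analytic on an open set containing `[a, E]`, positive on the
band `(a, b)`, has a simple zero at `E` (`f E = 0`, `f' E ≠ 0`), and the zeros of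
`f` in `[b, E)` counted with their analytic multiplicities are finite in number
with even total count, then `f' E < 0`. -/
theorem stmt_15 (a b E : ℝ) (hab : a < b) (hbE : b ≤ E)
    (U : Set ℝ) (hU : IsOpen U) (hIU : Set.Icc a E ⊆ U)
    (f : ℝ → ℝ) (hf : AnalyticOnNhd ℝ f U)
    (hpos : ∀ x ∈ Set.Ioo a b, 0 < f x)
    (hfE : f E = 0) (hfE' : deriv f E ≠ 0)
    (Z : Finset ℝ) (hZ : ∀ x : ℝ, x ∈ Z ↔ x ∈ Set.Ico b E ∧ f x = 0)
    (mult : ℝ → ℕ)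
    (hmult : ∀ x ∈ Z, 1 ≤ mult x ∧
      ∃ g : ℝ → ℝ, AnalyticAt ℝ g x ∧ g x ≠ 0 ∧
        ∀ᶠ y in nhds x, f y = (y - x) ^ mult x * g y)
    (heven : Even (∑ x ∈ Z, mult x)) :
    deriv f E < 0 :=
  stmt_15_general a b E hab hbE U hIU f hf hpos hfE hfE' Z hZ mult hmult heven
end
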